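/- arXiv:2202.06241 — 4 statements merged into one kernel-verified Lean document; each statement's English description precedes it below -/
import Mathlib

section
/- For a real d×N matrix Z and scalar a > 0, log det(I + a·Z·Zᵀ) ≤ d·log(1 + (a/d)·tr(Z·Zᵀ)), with equality if and only if all nonzero singular values of Z are equal (i.e., Z·Zᵀ is a scalar multiple of the identity). -/
/-! With `λᵢ ≥ 0` the eigenvalues of `Z Zᵀ`, `det (1 + a Z Zᵀ) = ∏ (1 + a λᵢ)` and
`tr (Z Zᵀ) = ∑ λᵢ`, so the bound is Jensen's inequality for `log` with uniform weights on the
points `1 + a λᵢ`. Strict concavity of `log` makes equality force all `λᵢ` to agree, which by the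
spectral theorem means that `Z Zᵀ` is a multiple of the identity. -/

open Matrix

namespace Real

variable {ι : Type*} [Fintype ι] [Nonempty ι] {x : ι → ℝ}

theorem sum_log_le_card_mul_log_mean (hx : ∀ i, 0 < x i) :
    ∑ i, log (x i) ≤ Fintype.card ι * log ((∑ i, x i) / Fintype.card ι) := by
  have hn : (0 : ℝ) < Fintype.card ι := by exact_mod_cast Fintype.card_pos
  have h := strictConcaveOn_log_Ioi.concaveOn.le_map_sum (t := .univ) (p := x)
    (fun _ _ => inv_nonneg.2 hn.le) (by simp [hn.ne']) (fun i _ => hx i)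
  simp only [smul_eq_mul, ← Finset.mul_sum] at h
  rwa [div_eq_inv_mul, ← inv_mul_le_iff₀ hn]

theorem sum_log_eq_card_mul_log_mean_iff (hx : ∀ i, 0 < x i) :
    ∑ i, log (x i) = Fintype.card ι * log ((∑ i, x i) / Fintype.card ι) ↔ ∀ i j, x i = x j := by
  have hn : (0 : ℝ) < Fintype.card ι := by exact_mod_cast Fintype.card_pos
  have h := strictConcaveOn_log_Ioi.map_sum_eq_iff_of_pos (t := .univ) (p := x)
    (fun _ _ => inv_pos.2 hn) (by simp [hn.ne']) (fun i _ => hx i)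
  simp only [smul_eq_mul, ← Finset.mul_sum, Finset.mem_univ, forall_const] at h
  rw [div_eq_inv_mul, ← h, eq_inv_mul_iff_mul_eq₀ hn.ne', eq_comm]

end Real

namespace Matrix.IsHermitian

variable {𝕜 n : Type*} [RCLike 𝕜] [Fintype n] [DecidableEq n] {A : Matrix n n 𝕜}

theorem det_one_add_smul (hA : A.IsHermitian) (a : ℝ) :
    det (1 + a • A) = ∏ i, ((1 + a * hA.eigenvalues i : ℝ) : 𝕜) := by
  conv_lhs => rw [hA.spectral_theorem]
  rw [← map_one (Unitary.conjStarAlgAut 𝕜 _ hA.eigenvectorUnitary),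
    RCLike.real_smul_eq_coe_smul (K := 𝕜), ← map_smul, ← map_add, Unitary.conjStarAlgAut_apply,
    det_mul_comm, ← mul_assoc, Unitary.coe_star_mul_self, one_mul, ← diagonal_one',
    ← diagonal_smul, diagonal_add, det_diagonal]
  simp

theorem exists_eq_smul_one_iff (hA : A.IsHermitian) :
    (∃ c : ℝ, A = c • 1) ↔ ∀ i j, hA.eigenvalues i = hA.eigenvalues j := by
  constructor
  · rintro ⟨c, rfl⟩
    have hc (k : n) : hA.eigenvalues k = c := by
      have : Nonempty n := ⟨k⟩
      have hspec : spectrum ℝ (c • 1 : Matrix n n 𝕜) = {c} := by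
        rw [← Algebra.algebraMap_eq_smul_one, spectrum.scalar_eq]
      simpa [hspec] using hA.eigenvalues_mem_spectrum_real k
    intro i j
    rw [hc i, hc j]
  · intro h
    rcases isEmpty_or_nonempty n with hn | ⟨⟨i₀⟩⟩
    · exact ⟨0, Subsingleton.elim _ _⟩
    refine ⟨hA.eigenvalues i₀, ?_⟩
    conv_lhs => rw [hA.spectral_theorem]
    have hdiag : diagonal (RCLike.ofReal ∘ hA.eigenvalues) =
        (hA.eigenvalues i₀ : 𝕜) • (1 : Matrix n n 𝕜) := by
      rw [smul_one_eq_diagonal]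
      congr 1
      ext i
      simp [h i i₀]
    rw [hdiag, map_smul, map_one, RCLike.real_smul_eq_coe_smul (K := 𝕜)]

end Matrix.IsHermitian

/-- AM–GM type bound: `log det(I + a·Z·Zᵀ) ≤ d·log(1 + (a/d)·tr(Z·Zᵀ))`, with equality iff
`Z·Zᵀ` is a scalar multiple of the identity (all nonzero singular values of `Z` equal). -/
theorem log_det_le_log_trace_bound (d N : ℕ) (hd : 0 < d)
    (Z : Matrix (Fin d) (Fin N) ℝ) (a : ℝ) (ha : 0 < a) :
    Real.log (Matrix.det (1 + a • (Z * Zᵀ))) ≤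
      (d : ℝ) * Real.log (1 + (a / d) * Matrix.trace (Z * Zᵀ)) ∧
    (Real.log (Matrix.det (1 + a • (Z * Zᵀ))) =
        (d : ℝ) * Real.log (1 + (a / d) * Matrix.trace (Z * Zᵀ)) ↔
      ∃ c : ℝ, Z * Zᵀ = c • (1 : Matrix (Fin d) (Fin d) ℝ)) := by
  have hZ : (Z * Zᵀ).PosSemidef := by simpa using posSemidef_self_mul_conjTranspose Z
  have hpos (i : Fin d) : 0 < 1 + a * hZ.1.eigenvalues i :=
    add_pos_of_pos_of_nonneg one_pos (mul_nonneg ha.le (hZ.eigenvalues_nonneg i))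
  have hlog : Real.log (det (1 + a • (Z * Zᵀ))) =
      ∑ i, Real.log (1 + a * hZ.1.eigenvalues i) := by
    rw [hZ.1.det_one_add_smul, ← Real.log_prod fun i _ => (hpos i).ne']
    simp only [Real.ringHom_apply]
  have hmean : (∑ i, (1 + a * hZ.1.eigenvalues i)) / d = 1 + a / d * trace (Z * Zᵀ) := by
    rw [hZ.1.trace_eq_sum_eigenvalues]
    simp only [Finset.sum_add_distrib, Finset.sum_const, Finset.card_univ, Fintype.card_fin,
      nsmul_eq_mul, mul_one, ← Finset.mul_sum, Real.ringHom_apply]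
    field_simp
  have : Nonempty (Fin d) := ⟨⟨0, hd⟩⟩
  rw [hlog, ← hmean]
  have hjensen := Real.sum_log_le_card_mul_log_mean hpos
  have hjensen_eq := Real.sum_log_eq_card_mul_log_mean_iff hpos
  rw [Fintype.card_fin] at hjensen hjensen_eq
  refine ⟨hjensen, ?_⟩
  rw [hjensen_eq, hZ.1.exists_eq_smul_one_iff]
  simp only [add_right_inj, mul_right_inj' ha.ne']
end

section
/- Let Z ∈ ℝ^{d×N} have unit-norm columns. Then the coding rate R(Z,ε) = ½·log det(I + (d/(Nε²))·ZᵀZ) satisfies R(Z,ε) ≤ (min(d,N)/2)·log(1 + (d·N)/(min(d,N)·N·ε²)), with equality when the columns of Z form an orthonormal set scaled appropriately (e.g., when d ≥ N and the columns are orthonormal, each eigenvalue of ZᵀZ equals 1). -/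
open Matrix

lemma det_one_add_le_pow {n : ℕ} (hn : 0 < n) (S : Matrix (Fin n) (Fin n) ℝ)
    (hS : S.PosSemidef) : Matrix.det (1 + S) ≤ (1 + S.trace / n) ^ n := by
  have hA : (1 + S).PosDef := Matrix.PosDef.add_posSemidef Matrix.PosDef.one hS
  have hH : (1 + S).IsHermitian := hA.isHermitian
  set μ := hH.eigenvalues with hμ
  have hμ0 : ∀ i, 0 ≤ μ i := fun i => hA.posSemidef.eigenvalues_nonneg i
  have hdet : Matrix.det (1 + S) = ∏ i, μ i := by
    simpa using hH.det_eq_prod_eigenvalues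
  have htr : ∑ i, μ i = (1 + S).trace := by
    simpa using hH.trace_eq_sum_eigenvalues.symm
  have hP0 : 0 ≤ ∏ i, μ i := Finset.prod_nonneg fun i _ => hμ0 i
  have hsumw : ∑ _i : Fin n, (1 : ℝ) = n := by simp
  have amgm := Real.geom_mean_le_arith_mean (Finset.univ) (fun _ => (1 : ℝ)) μ
    (fun i _ => zero_le_one) (by rw [hsumw]; exact_mod_cast hn) (fun i _ => hμ0 i)
  simp only [Real.rpow_one, one_mul, hsumw] at amgm
  have key : (∏ i, μ i) ≤ ((∑ i, μ i) / n) ^ n := by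
    have h1 : ((∏ i, μ i) ^ ((n : ℝ)⁻¹)) ^ n ≤ ((∑ i, μ i) / n) ^ n :=
      pow_le_pow_left₀ (Real.rpow_nonneg hP0 _) amgm n
    rwa [← Real.rpow_natCast ((∏ i, μ i) ^ ((n : ℝ)⁻¹)) n, ← Real.rpow_mul hP0,
      inv_mul_cancel₀ (by exact_mod_cast hn.ne'), Real.rpow_one] at h1
  rw [hdet]
  calc (∏ i, μ i) ≤ ((∑ i, μ i) / n) ^ n := key
    _ = (1 + S.trace / n) ^ n := by
        rw [htr, Matrix.trace_add, Matrix.trace_one, Fintype.card_fin]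
        congr 1
        field_simp


/-- For `Z` with unit-norm columns, the coding rate satisfies
`R(Z,ε) ≤ (min(d,N)/2)·log(1 + (d·N)/(min(d,N)·N·ε²))`, with equality when `d ≥ N` and the
columns of `Z` are orthonormal. -/
theorem codingRate_upper_bound (d N : ℕ) (hd : 0 < d) (hN : 0 < N)
    (Z : Matrix (Fin d) (Fin N) ℝ) (ε : ℝ) (hε : 0 < ε)
    (hunit : ∀ j : Fin N, ∑ i : Fin d, (Z i j) ^ 2 = 1) :
    (1 / 2) * Real.log (Matrix.det (1 + ((d : ℝ) / (N * ε ^ 2)) • (Zᵀ * Z))) ≤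
      ((min d N : ℕ) : ℝ) / 2 *
        Real.log (1 + ((d : ℝ) * N) / (((min d N : ℕ) : ℝ) * N * ε ^ 2)) ∧
    (N ≤ d → (∀ j k : Fin N, j ≠ k → ∑ i : Fin d, Z i j * Z i k = 0) →
      (1 / 2) * Real.log (Matrix.det (1 + ((d : ℝ) / (N * ε ^ 2)) • (Zᵀ * Z))) =
        ((min d N : ℕ) : ℝ) / 2 *
          Real.log (1 + ((d : ℝ) * N) / (((min d N : ℕ) : ℝ) * N * ε ^ 2))) := by
  have hNr : (0 : ℝ) < N := by exact_mod_cast hN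
  have hdr : (0 : ℝ) < d := by exact_mod_cast hd
  have hε2 : (0 : ℝ) < ε ^ 2 := by positivity
  set c : ℝ := (d : ℝ) / (N * ε ^ 2) with hc
  have hc0 : 0 < c := by positivity
  -- the square-root trick to see c • (Zᵀ*Z) and c • (Z*Zᵀ) are PSD
  set W : Matrix (Fin d) (Fin N) ℝ := Real.sqrt c • Z with hW
  have hWt : Wᵀ = Real.sqrt c • Zᵀ := by rw [hW, Matrix.transpose_smul]
  have hWW : Wᵀ * W = c • (Zᵀ * Z) := by
    rw [hW, hWt, Matrix.smul_mul, Matrix.mul_smul, smul_smul, Real.mul_self_sqrt hc0.le]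
  have hWW' : W * Wᵀ = c • (Z * Zᵀ) := by
    rw [hW, hWt, Matrix.smul_mul, Matrix.mul_smul, smul_smul, Real.mul_self_sqrt hc0.le]
  have hPSD : (c • (Zᵀ * Z)).PosSemidef := by
    rw [← hWW]
    simpa [Matrix.conjTranspose_eq_transpose_of_trivial] using
      Matrix.posSemidef_conjTranspose_mul_self W
  have hPSD' : (c • (Z * Zᵀ)).PosSemidef := by
    rw [← hWW']
    simpa [Matrix.conjTranspose_eq_transpose_of_trivial] using
      Matrix.posSemidef_self_mul_conjTranspose W
  -- traces
  have htrZZ : (Zᵀ * Z).trace = (N : ℝ) := by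
    simp only [Matrix.trace, Matrix.diag, Matrix.mul_apply, Matrix.transpose_apply]
    calc ∑ j : Fin N, ∑ i : Fin d, Z i j * Z i j
        = ∑ j : Fin N, (1 : ℝ) := by
          refine Finset.sum_congr rfl fun j _ => ?_
          simpa [sq] using hunit j
      _ = (N : ℝ) := by simp
  have htrZZ' : (Z * Zᵀ).trace = (N : ℝ) := by
    simp only [Matrix.trace, Matrix.diag, Matrix.mul_apply, Matrix.transpose_apply]
    rw [Finset.sum_comm]
    calc ∑ j : Fin N, ∑ i : Fin d, Z i j * Z i j
        = ∑ j : Fin N, (1 : ℝ) := by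
          refine Finset.sum_congr rfl fun j _ => ?_
          simpa [sq] using hunit j
      _ = (N : ℝ) := by simp
  have hdetpos : 0 < Matrix.det (1 + c • (Zᵀ * Z)) :=
    (Matrix.PosDef.add_posSemidef Matrix.PosDef.one hPSD).det_pos
  constructor
  · -- upper bound
    rcases le_or_gt N d with hNd | hdN
    · -- N ≤ d : min = N
      have hmin : min d N = N := min_eq_right hNd
      have hbound : Matrix.det (1 + c • (Zᵀ * Z)) ≤ (1 + c) ^ N := by
        have := det_one_add_le_pow hN (c • (Zᵀ * Z)) hPSD
        rwa [Matrix.trace_smul, htrZZ, smul_eq_mul,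
          mul_div_assoc, div_self hNr.ne', mul_one] at this
      have harg : 1 + ((d : ℝ) * N) / (((min d N : ℕ) : ℝ) * N * ε ^ 2) = 1 + c := by
        rw [hmin, hc]
        congr 1
        field_simp
      rw [harg, hmin]
      have h1c : (0 : ℝ) < 1 + c := by linarith
      calc (1 / 2) * Real.log (Matrix.det (1 + c • (Zᵀ * Z)))
          ≤ (1 / 2) * Real.log ((1 + c) ^ N) := by
            have := Real.log_le_log hdetpos hbound
            linarith
        _ = (N : ℝ) / 2 * Real.log (1 + c) := by
            rw [Real.log_pow]; ring
    · -- d < N : min = d, use Sylvester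
      have hmin : min d N = d := min_eq_left hdN.le
      have hsyl : Matrix.det (1 + c • (Zᵀ * Z)) = Matrix.det (1 + c • (Z * Zᵀ)) := by
        have : c • (Zᵀ * Z) = (c • Zᵀ) * Z := by rw [Matrix.smul_mul]
        rw [this, Matrix.det_one_add_mul_comm, Matrix.mul_smul]
      have hbound : Matrix.det (1 + c • (Z * Zᵀ)) ≤ (1 + c * N / d) ^ d := by
        have := det_one_add_le_pow hd (c • (Z * Zᵀ)) hPSD'
        rw [mul_div_assoc]
        rwa [Matrix.trace_smul, htrZZ', smul_eq_mul, mul_div_assoc] at this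
      have harg : 1 + ((d : ℝ) * N) / (((min d N : ℕ) : ℝ) * N * ε ^ 2) = 1 + c * N / d := by
        rw [hmin, hc]
        congr 1
        field_simp
      rw [harg, hmin]
      have h1c : (0 : ℝ) < 1 + c * N / d := by positivity
      calc (1 / 2) * Real.log (Matrix.det (1 + c • (Zᵀ * Z)))
          ≤ (1 / 2) * Real.log ((1 + c * N / d) ^ d) := by
            have := Real.log_le_log hdetpos (hsyl ▸ hbound)
            linarith
        _ = (d : ℝ) / 2 * Real.log (1 + c * N / d) := by
            rw [Real.log_pow]; ring
  · -- equality case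
    intro hNd horth
    have hmin : min d N = N := min_eq_right hNd
    have hZZ : Zᵀ * Z = 1 := by
      ext j k
      rw [Matrix.mul_apply]
      by_cases h : j = k
      · subst h
        simp only [Matrix.transpose_apply, Matrix.one_apply_eq]
        simpa [sq] using hunit j
      · simp only [Matrix.transpose_apply, Matrix.one_apply_ne h]
        exact horth j k h
    have hdet : Matrix.det (1 + c • (Zᵀ * Z)) = (1 + c) ^ N := by
      rw [hZZ]
      have : (1 : Matrix (Fin N) (Fin N) ℝ) + c • 1 = (1 + c) • 1 := by
        rw [add_smul, one_smul]
      rw [this, Matrix.det_smul, Matrix.det_one, mul_one]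
      simp
    have harg : 1 + ((d : ℝ) * N) / (((min d N : ℕ) : ℝ) * N * ε ^ 2) = 1 + c := by
      rw [hmin, hc]
      congr 1
      field_simp
    rw [harg, hmin, hdet, Real.log_pow]
    ring
end

section
/- For any Z ∈ ℝ^{d×N} with unit-norm columns partitioned into two blocks Z₁, Z₂ and a > 0, log det(I + a·ZᵀZ) ≤ log det(I + a·Z₁ᵀZ₁) + log det(I + a·Z₂ᵀZ₂), with equality if and only if the column spaces of Z̃₁ and Z̃₂ are orthogonal, where Z̃ satisfies Z̃ᵀZ̃ = I + a·ZᵀZ with the compatible block structure. -/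
open Matrix

/-!
Write `M = 1 + a • ZᵀZ` in block form `[[A, B], [Bᵀ, D]]`; it is positive definite, so the Schur
complement gives `det M = det A * det (D - Bᵀ A⁻¹ B)`. For `P` positive definite and `S = CᵀC`
positive semidefinite, `det (P + S) = det P * det (1 + C P⁻¹ Cᵀ)`, and `det (1 + R) = ∏ (1 + λᵢ) ≥ 1`
with equality iff `R = 0`. Hence `det M ≤ det A * det D` (Fischer's inequality), with equality iff
`B = 0`; and `B = W₁ᵀ W₂` because `WᵀW = M`.
-/

namespace Matrix

theorem PosDef.of_fromBlocks₁₁ {m n R : Type*} [Ring R] [PartialOrder R] [StarRing R]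
    {A : Matrix m m R} {B : Matrix m n R} {D : Matrix n n R}
    (hM : (fromBlocks A B Bᴴ D).PosDef) : A.PosDef :=
  hM.submatrix Sum.inl_injective

variable {m n : Type*} [Fintype n] [DecidableEq n]

theorem IsHermitian.det_one_add {𝕜 : Type*} [RCLike 𝕜] {A : Matrix n n 𝕜} (hA : A.IsHermitian) :
    det (1 + A) = ∏ i, (1 + (hA.eigenvalues i : 𝕜)) := by
  set U : Matrix n n 𝕜 := (hA.eigenvectorUnitary : Matrix n n 𝕜)
  have hUU : star U * U = 1 := Unitary.coe_star_mul_self _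
  conv_lhs => rw [hA.spectral_theorem, Unitary.conjStarAlgAut_apply]
  rw [det_one_add_mul_comm, ← Matrix.mul_assoc, hUU, Matrix.one_mul, ← diagonal_one,
    diagonal_add, det_diagonal]
  simp

theorem PosSemidef.one_le_det_one_add {R : Matrix n n ℝ} (hR : R.PosSemidef) :
    1 ≤ det (1 + R) := by
  rw [hR.1.det_one_add]
  exact Finset.one_le_prod fun i _ => by simpa using hR.eigenvalues_nonneg i

theorem PosSemidef.det_one_add_eq_one_iff {R : Matrix n n ℝ} (hR : R.PosSemidef) :
    det (1 + R) = 1 ↔ R = 0 := by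
  refine ⟨fun h => ?_, fun h => by simp [h]⟩
  rw [← hR.1.eigenvalues_eq_zero_iff]
  by_contra hne
  obtain ⟨i, hi⟩ := Function.ne_iff.mp hne
  have hlt : ∏ _j : n, (1 : ℝ) < ∏ j, (1 + hR.1.eigenvalues j) :=
    Finset.prod_lt_prod (fun _ _ => one_pos)
      (fun j _ => le_add_of_nonneg_right (hR.eigenvalues_nonneg j))
      ⟨i, Finset.mem_univ _, lt_add_of_pos_right _ ((hR.eigenvalues_nonneg i).lt_of_ne' hi)⟩
  have hdet := hR.1.det_one_add
  simp only [Finset.prod_const_one] at hlt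
  simp only [RCLike.ofReal_real_eq_id, id] at hdet
  linarith

open scoped ComplexOrder MatrixOrder in
theorem PosDef.conjTranspose_mul_mul_same_eq_zero_iff {𝕜 : Type*} [RCLike 𝕜]
    {A : Matrix n n 𝕜} (hA : A.PosDef) {B : Matrix n m 𝕜} :
    Bᴴ * A * B = 0 ↔ B = 0 := by
  obtain ⟨C, hC, rfl⟩ := CStarAlgebra.isStrictlyPositive_iff_eq_star_mul_self.mp
    hA.isStrictlyPositive
  rw [star_eq_conjTranspose, ← Matrix.mul_assoc, Matrix.mul_assoc _ C, ← conjTranspose_mul,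
    conjTranspose_mul_self_eq_zero]
  have := hC.invertible
  exact ⟨fun h => by simpa using congrArg (C⁻¹ * ·) h, fun h => by rw [h, Matrix.mul_zero]⟩

open scoped MatrixOrder in
theorem PosDef.exists_det_add_eq_det_mul_det_one_add {P S : Matrix n n ℝ} (hP : P.PosDef)
    (hS : S.PosSemidef) :
    ∃ R : Matrix n n ℝ, R.PosSemidef ∧ (R = 0 ↔ S = 0) ∧ det (P + S) = det P * det (1 + R) := by
  obtain ⟨C, rfl⟩ := CStarAlgebra.nonneg_iff_eq_star_mul_self.mp hS.nonneg
  rw [star_eq_conjTranspose]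
  refine ⟨C * P⁻¹ * Cᴴ, hP.inv.posSemidef.mul_mul_conjTranspose_same C, ?_,
    det_add_mul _ _ hP.det_pos.ne'.isUnit⟩
  have hR := hP.inv.conjTranspose_mul_mul_same_eq_zero_iff (B := Cᴴ)
  rw [conjTranspose_conjTranspose, conjTranspose_eq_zero] at hR
  rw [hR, conjTranspose_mul_self_eq_zero]

theorem PosDef.det_le_det_add {P S : Matrix n n ℝ} (hP : P.PosDef) (hS : S.PosSemidef) :
    det P ≤ det (P + S) := by
  obtain ⟨R, hR, -, hdet⟩ := hP.exists_det_add_eq_det_mul_det_one_add hS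
  rw [hdet]
  exact le_mul_of_one_le_right hP.det_pos.le hR.one_le_det_one_add

theorem PosDef.det_add_eq_det_iff {P S : Matrix n n ℝ} (hP : P.PosDef) (hS : S.PosSemidef) :
    det (P + S) = det P ↔ S = 0 := by
  obtain ⟨R, hR, hRS, hdet⟩ := hP.exists_det_add_eq_det_mul_det_one_add hS
  rw [hdet, mul_eq_left₀ hP.det_pos.ne', hR.det_one_add_eq_one_iff, hRS]

section Fischer

variable [Fintype m] [DecidableEq m] {A : Matrix m m ℝ} {B : Matrix m n ℝ} {D : Matrix n n ℝ}

theorem PosDef.det_fromBlocks_eq_mul_det_schur (hM : (fromBlocks A B Bᴴ D).PosDef) :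
    det (fromBlocks A B Bᴴ D) = det A * det (D - Bᴴ * A⁻¹ * B) := by
  have := hM.of_fromBlocks₁₁.isUnit.invertible
  rw [det_fromBlocks₁₁, invOf_eq_nonsing_inv]

theorem PosDef.schur_of_fromBlocks (hM : (fromBlocks A B Bᴴ D).PosDef) :
    (D - Bᴴ * A⁻¹ * B).PosDef := by
  have hA := hM.of_fromBlocks₁₁
  have := hA.isUnit.invertible
  refine ((hA.fromBlocks₁₁ B D).mp hM.posSemidef).posDef_iff_det_ne_zero.mpr fun h => ?_
  have hdet := hM.det_pos
  rw [hM.det_fromBlocks_eq_mul_det_schur, h, mul_zero] at hdet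
  exact hdet.false

theorem PosDef.det_fromBlocks_le (hM : (fromBlocks A B Bᴴ D).PosDef) :
    det (fromBlocks A B Bᴴ D) ≤ det A * det D := by
  have hA := hM.of_fromBlocks₁₁
  rw [hM.det_fromBlocks_eq_mul_det_schur]
  gcongr
  · exact hA.det_pos.le
  · simpa using hM.schur_of_fromBlocks.det_le_det_add
      (hA.inv.posSemidef.conjTranspose_mul_mul_same B)

theorem PosDef.det_fromBlocks_eq_mul_iff (hM : (fromBlocks A B Bᴴ D).PosDef) :
    det (fromBlocks A B Bᴴ D) = det A * det D ↔ B = 0 := by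
  have hA := hM.of_fromBlocks₁₁
  have h := hM.schur_of_fromBlocks.det_add_eq_det_iff
    (hA.inv.posSemidef.conjTranspose_mul_mul_same B)
  rw [sub_add_cancel, hA.inv.conjTranspose_mul_mul_same_eq_zero_iff] at h
  rw [hM.det_fromBlocks_eq_mul_det_schur, mul_right_inj' hA.det_pos.ne', eq_comm, h]

end Fischer

theorem posDef_one_add_smul_transpose_mul_self {d : Type*} [Fintype d] (Z : Matrix d n ℝ)
    {a : ℝ} (ha : 0 ≤ a) : (1 + a • (Zᵀ * Z)).PosDef :=
  PosDef.one.add_posSemidef ((posSemidef_conjTranspose_mul_self Z).smul ha)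

end Matrix

theorem log_det_subadditive_blocks_general (d e N₁ N₂ : ℕ)
    (Z₁ : Matrix (Fin d) (Fin N₁) ℝ) (Z₂ : Matrix (Fin d) (Fin N₂) ℝ)
    (a : ℝ) (ha : 0 < a)
    (W₁ : Matrix (Fin e) (Fin N₁) ℝ) (W₂ : Matrix (Fin e) (Fin N₂) ℝ)
    (hW : (Matrix.fromCols W₁ W₂)ᵀ * Matrix.fromCols W₁ W₂ =
      1 + a • ((Matrix.fromCols Z₁ Z₂)ᵀ * Matrix.fromCols Z₁ Z₂)) :
    Real.log (Matrix.det
        (1 + a • ((Matrix.fromCols Z₁ Z₂)ᵀ * Matrix.fromCols Z₁ Z₂))) ≤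
      Real.log (Matrix.det (1 + a • (Z₁ᵀ * Z₁))) +
        Real.log (Matrix.det (1 + a • (Z₂ᵀ * Z₂))) ∧
    (Real.log (Matrix.det
        (1 + a • ((Matrix.fromCols Z₁ Z₂)ᵀ * Matrix.fromCols Z₁ Z₂))) =
      Real.log (Matrix.det (1 + a • (Z₁ᵀ * Z₁))) +
        Real.log (Matrix.det (1 + a • (Z₂ᵀ * Z₂))) ↔ W₁ᵀ * W₂ = 0) := by
  have hM := posDef_one_add_smul_transpose_mul_self (fromCols Z₁ Z₂) ha.le
  have hA := (posDef_one_add_smul_transpose_mul_self Z₁ ha.le).det_pos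
  have hD := (posDef_one_add_smul_transpose_mul_self Z₂ ha.le).det_pos
  have hblocks : 1 + a • ((fromCols Z₁ Z₂)ᵀ * fromCols Z₁ Z₂) =
      fromBlocks (1 + a • (Z₁ᵀ * Z₁)) (a • (Z₁ᵀ * Z₂)) (a • (Z₁ᵀ * Z₂))ᴴ (1 + a • (Z₂ᵀ * Z₂)) := by
    rw [transpose_fromCols, fromRows_mul_fromCols, fromBlocks_smul, ← fromBlocks_one,
      fromBlocks_add]
    simp
  have hB : W₁ᵀ * W₂ = a • (Z₁ᵀ * Z₂) := by
    have h₁₂ := congrArg toBlocks₁₂ hW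
    rwa [hblocks, transpose_fromCols, fromRows_mul_fromCols, toBlocks_fromBlocks₁₂,
      toBlocks_fromBlocks₁₂] at h₁₂
  rw [hB, hblocks, ← Real.log_mul hA.ne' hD.ne']
  rw [hblocks] at hM
  exact ⟨Real.log_le_log hM.det_pos hM.det_fromBlocks_le,
    (Real.log_injOn_pos.eq_iff hM.det_pos (mul_pos hA hD)).trans hM.det_fromBlocks_eq_mul_iff⟩

/-- For `Z = [Z₁, Z₂]` with unit-norm columns and `a > 0`,
`log det(I + a·ZᵀZ) ≤ log det(I + a·Z₁ᵀZ₁) + log det(I + a·Z₂ᵀZ₂)`, with equality iff the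
column spaces of the corresponding blocks `Z̃ = [W₁, W₂]` (where `Z̃ᵀZ̃ = I + a·ZᵀZ`) are
orthogonal, i.e. `W₁ᵀ·W₂ = 0`. -/
theorem log_det_subadditive_blocks (d e N₁ N₂ : ℕ)
    (Z₁ : Matrix (Fin d) (Fin N₁) ℝ) (Z₂ : Matrix (Fin d) (Fin N₂) ℝ)
    (a : ℝ) (ha : 0 < a)
    (hunit₁ : ∀ j : Fin N₁, ∑ i : Fin d, (Z₁ i j) ^ 2 = 1)
    (hunit₂ : ∀ j : Fin N₂, ∑ i : Fin d, (Z₂ i j) ^ 2 = 1)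
    (W₁ : Matrix (Fin e) (Fin N₁) ℝ) (W₂ : Matrix (Fin e) (Fin N₂) ℝ)
    (hW : (Matrix.fromCols W₁ W₂)ᵀ * Matrix.fromCols W₁ W₂ =
      1 + a • ((Matrix.fromCols Z₁ Z₂)ᵀ * Matrix.fromCols Z₁ Z₂)) :
    Real.log (Matrix.det
        (1 + a • ((Matrix.fromCols Z₁ Z₂)ᵀ * Matrix.fromCols Z₁ Z₂))) ≤
      Real.log (Matrix.det (1 + a • (Z₁ᵀ * Z₁))) +
        Real.log (Matrix.det (1 + a • (Z₂ᵀ * Z₂))) ∧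
    (Real.log (Matrix.det
        (1 + a • ((Matrix.fromCols Z₁ Z₂)ᵀ * Matrix.fromCols Z₁ Z₂))) =
      Real.log (Matrix.det (1 + a • (Z₁ᵀ * Z₁))) +
        Real.log (Matrix.det (1 + a • (Z₂ᵀ * Z₂))) ↔ W₁ᵀ * W₂ = 0) :=
  log_det_subadditive_blocks_general d e N₁ N₂ Z₁ Z₂ a ha W₁ W₂ hW
end

section
/- Let the membership matrices Π_k be diagonal with entries in {0,1} partitioning the N columns, and assume that all columns of Z are unit-norm. Then the rate reduction ΔR(Z, Π, ε) = R(Z,ε) − R^c(Z,ε|Π) is nonnegative, i.e., ½·log det(I + (d/(Nε²))·Z·Zᵀ) ≥ Σ_k (N_k/(2N))·log det(I + (d/(N_k ε²))·Z·Π_k·Zᵀ). -/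
open Matrix


lemma my_trace_eq_sum_eigenvalues {n : Type*} [Fintype n] [DecidableEq n]
    {A : Matrix n n ℝ} (hA : A.IsHermitian) : A.trace = ∑ i, hA.eigenvalues i := by
  conv_lhs => rw [hA.spectral_theorem, Unitary.conjStarAlgAut_apply]
  rw [Matrix.trace_mul_cycle, Unitary.coe_star_mul_self, one_mul, Matrix.trace_diagonal]
  simp

lemma my_log_det_le_trace {n : Type*} [Fintype n] [DecidableEq n]
    {A : Matrix n n ℝ} (hA : A.PosSemidef) (hdet : 0 < A.det) :
    Real.log A.det ≤ A.trace - Fintype.card n := by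
  have hherm := hA.1
  have hprod : A.det = ∏ i, hherm.eigenvalues i := by
    simpa using hherm.det_eq_prod_eigenvalues
  have hpos : ∀ i : n, 0 < hherm.eigenvalues i := by
    intro i
    rcases lt_or_eq_of_le (hA.eigenvalues_nonneg i) with h | h
    · exact h
    · exfalso
      rw [hprod] at hdet
      exact absurd (Finset.prod_eq_zero (Finset.mem_univ i) h.symm) (by positivity)
  rw [hprod, Real.log_prod (fun i _ => (hpos i).ne'),
    my_trace_eq_sum_eigenvalues hherm]
  have : ((Fintype.card n : ℝ)) = ∑ _i : n, (1 : ℝ) := by simp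
  rw [this, ← Finset.sum_sub_distrib]
  exact Finset.sum_le_sum fun i _ => Real.log_le_sub_one_of_pos (hpos i)

open scoped MatrixOrder in
lemma my_log_det_add_le_trace {n : Type*} [Fintype n] [DecidableEq n]
    {S X : Matrix n n ℝ} (hS : S.PosDef) (hX : X.PosDef) :
    Real.log S.det + Real.log X.det + Fintype.card n ≤ (S * X).trace := by
  set B := CFC.sqrt S with hB
  have hBps : B.PosSemidef := (CFC.sqrt_nonneg S).posSemidef
  have hBH : Bᴴ = B := hBps.1
  have hBB : B * B = S := CFC.sqrt_mul_sqrt_self S hS.posSemidef.nonneg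
  have hCps : (B * X * B).PosSemidef := by
    have := hX.posSemidef.mul_mul_conjTranspose_same B
    rwa [hBH] at this
  have hdetC : (B * X * B).det = S.det * X.det := by
    rw [det_mul, det_mul, ← hBB, det_mul]; ring
  have htrC : (B * X * B).trace = (S * X).trace := by
    rw [Matrix.trace_mul_cycle, hBB]
  have hdpos : 0 < (B * X * B).det := by
    rw [hdetC]; exact mul_pos hS.det_pos hX.det_pos
  have := my_log_det_le_trace hCps hdpos
  rw [hdetC, htrC, Real.log_mul hS.det_pos.ne' hX.det_pos.ne'] at this
  linarith

lemma my_logdet_concave {n : Type*} [Fintype n] [DecidableEq n] {K : ℕ}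
    (w : Fin K → ℝ) (X : Fin K → Matrix n n ℝ)
    (hw : ∀ k, 0 ≤ w k) (hw1 : ∑ k, w k = 1)
    (hX : ∀ k, (X k).PosDef) {M : Matrix n n ℝ}
    (hM : M.PosDef) (hMsum : M = ∑ k, w k • X k) :
    ∑ k, w k * Real.log (X k).det ≤ Real.log M.det := by
  have hSinv : M⁻¹.PosDef := hM.inv
  have hdetinv : M⁻¹.det = M.det⁻¹ := by
    rw [det_nonsing_inv, Ring.inverse_eq_inv]
  have key : ∀ k, Real.log (X k).det ≤
      (M⁻¹ * X k).trace - Real.log M⁻¹.det - Fintype.card n := by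
    intro k
    have := my_log_det_add_le_trace hSinv (hX k)
    linarith
  have hMM : M⁻¹ * M = 1 := nonsing_inv_mul M (isUnit_iff_ne_zero.mpr hM.det_pos.ne')
  have expand : M⁻¹ * M = ∑ k, w k • (M⁻¹ * X k) := by
    nth_rewrite 2 [hMsum]
    rw [Matrix.mul_sum]
    simp [Matrix.mul_smul]
  have htr : ∑ k, w k * (M⁻¹ * X k).trace = (Fintype.card n : ℝ) := by
    have h2 := congrArg Matrix.trace expand
    rw [hMM, trace_one, Matrix.trace_sum] at h2
    simp only [Matrix.trace_smul, smul_eq_mul] at h2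
    exact h2.symm
  have step : ∑ k, w k * Real.log (X k).det ≤
      ∑ k, w k * ((M⁻¹ * X k).trace - Real.log M⁻¹.det - Fintype.card n) :=
    Finset.sum_le_sum fun k _ => mul_le_mul_of_nonneg_left (key k) (hw k)
  have halg : ∑ k, w k * ((M⁻¹ * X k).trace - Real.log M⁻¹.det - Fintype.card n)
      = (∑ k, w k * (M⁻¹ * X k).trace) - (∑ k, w k) * (Real.log M⁻¹.det + Fintype.card n) := by
    rw [Finset.sum_mul, ← Finset.sum_sub_distrib]
    congr 1
    ext k
    ring
  rw [halg, htr, hw1, hdetinv, Real.log_inv] at step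
  linarith


lemma my_posSemidef_smul {n : Type*} [Fintype n] {A : Matrix n n ℝ}
    (hA : A.PosSemidef) {a : ℝ} (ha : 0 ≤ a) : (a • A).PosSemidef := by
  constructor
  · show (a • A)ᴴ = a • A
    rw [conjTranspose_smul, star_trivial, hA.1.eq]
  · intro x
    exact (hA.smul ha).2 x

theorem rate_reduction_nonneg' (d N K : ℕ) (hd : 0 < d) (hN : 0 < N)
    (Z : Matrix (Fin d) (Fin N) ℝ) (ε : ℝ) (hε : 0 < ε)
    (g : Fin N → Fin K) :
    ∑ k : Fin K,
      ((Finset.univ.filter (fun i => g i = k)).card : ℝ) / (2 * N) *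
        Real.log (Matrix.det (1 +
          ((d : ℝ) / (((Finset.univ.filter (fun i => g i = k)).card : ℝ) * ε ^ 2)) •
            (Z * Matrix.diagonal (fun i => if g i = k then (1 : ℝ) else 0) * Zᵀ))) ≤
    (1 / 2) * Real.log (Matrix.det (1 + ((d : ℝ) / (N * ε ^ 2)) • (Z * Zᵀ))) := by
  classical
  set c : Fin K → ℕ := fun k => (Finset.univ.filter (fun i => g i = k)).card with hc
  set P : Fin K → Matrix (Fin N) (Fin N) ℝ :=
    fun k => Matrix.diagonal (fun i => if g i = k then (1 : ℝ) else 0) with hP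
  set Mk : Fin K → Matrix (Fin d) (Fin d) ℝ := fun k => Z * P k * Zᵀ with hMk
  set X : Fin K → Matrix (Fin d) (Fin d) ℝ :=
    fun k => 1 + ((d : ℝ) / ((c k : ℝ) * ε ^ 2)) • Mk k with hX
  set w : Fin K → ℝ := fun k => (c k : ℝ) / (N : ℝ) with hw
  set M : Matrix (Fin d) (Fin d) ℝ :=
    1 + ((d : ℝ) / ((N : ℝ) * ε ^ 2)) • (Z * Zᵀ) with hM
  have hNne : (N : ℝ) ≠ 0 := Nat.cast_ne_zero.mpr hN.ne'
  have hcsum : ∑ k, c k = N := by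
    have := Finset.card_eq_sum_card_fiberwise (fun x (_ : x ∈ Finset.univ) => Finset.mem_univ (g x))
    simpa [hc] using this.symm
  have hwnn : ∀ k, 0 ≤ w k := fun k => by positivity
  have hw1 : ∑ k, w k = 1 := by
    rw [hw, ← Finset.sum_div]
    rw [← Nat.cast_sum, hcsum, div_self hNne]
  have hZH : Zᴴ = Zᵀ := Matrix.conjTranspose_eq_transpose_of_trivial Z
  have hMkps : ∀ k, (Mk k).PosSemidef := by
    intro k
    have hPk : (P k).PosSemidef := by
      refine posSemidef_diagonal_iff.mpr fun i => ?_
      split_ifs <;> norm_num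
    have := hPk.mul_mul_conjTranspose_same Z
    rwa [hZH] at this
  have hXpd : ∀ k, (X k).PosDef := by
    intro k
    exact Matrix.PosDef.one.add_posSemidef
      (my_posSemidef_smul (hMkps k) (by positivity))
  have hZZps : (Z * Zᵀ).PosSemidef := by
    have := Matrix.posSemidef_self_mul_conjTranspose Z
    rwa [hZH] at this
  have hMpd : M.PosDef :=
    Matrix.PosDef.one.add_posSemidef (my_posSemidef_smul hZZps (by positivity))
  have hPsum : ∑ k, P k = (1 : Matrix (Fin N) (Fin N) ℝ) := by
    ext i j
    by_cases hij : i = j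
    · subst hij
      simp [hP, Matrix.sum_apply, Matrix.diagonal_apply, Finset.sum_ite_eq]
    · simp [hP, Matrix.sum_apply, Matrix.diagonal_apply, hij, Matrix.one_apply]
  have hterm : ∀ k, w k • X k
      = ((c k : ℝ) / N) • (1 : Matrix (Fin d) (Fin d) ℝ)
        + ((d : ℝ) / ((N : ℝ) * ε ^ 2)) • Mk k := by
    intro k
    by_cases h0 : c k = 0
    · have hPk0 : P k = 0 := by
        have hfe : ∀ i : Fin N, g i ≠ k := by
          intro i hi
          have : i ∈ Finset.univ.filter (fun i => g i = k) := by
            simp [hi]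
          simp [Finset.card_eq_zero.mp h0] at this
        ext i j
        simp [hP, Matrix.diagonal_apply, hfe i]
      have hMk0 : Mk k = 0 := by
        rw [hMk]; dsimp only; rw [hPk0, Matrix.mul_zero, Matrix.zero_mul]
      rw [hw]; dsimp only
      rw [h0, hMk0]
      simp
    · have hck : (c k : ℝ) ≠ 0 := Nat.cast_ne_zero.mpr h0
      rw [hw, hX]; dsimp only
      rw [smul_add]
      congr 1
      rw [smul_smul]
      congr 1
      field_simp
  have hMsum : M = ∑ k, w k • X k := by
    rw [hM]
    rw [Finset.sum_congr rfl fun k _ => hterm k]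
    rw [Finset.sum_add_distrib, ← Finset.sum_smul, ← Finset.smul_sum]
    have h1 : ∑ k, (c k : ℝ) / N = 1 := hw1
    have h2 : ∑ k, Mk k = Z * Zᵀ := by
      rw [hMk]
      dsimp only
      rw [← Matrix.sum_mul, ← Matrix.mul_sum, hPsum, Matrix.mul_one]
    rw [h1, h2, one_smul]
  have main := my_logdet_concave w X hwnn hw1 hXpd hMpd hMsum
  have goalEq : ∀ k, ((c k : ℝ) / (2 * N)) * Real.log (X k).det
      = (1 / 2) * (w k * Real.log (X k).det) := by
    intro k
    rw [hw]
    ring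
  calc ∑ k, ((c k : ℝ) / (2 * N)) * Real.log (X k).det
      = (1 / 2) * ∑ k, w k * Real.log (X k).det := by
        rw [Finset.mul_sum]
        exact Finset.sum_congr rfl fun k _ => goalEq k
    _ ≤ (1 / 2) * Real.log M.det := by linarith

/-- Nonnegativity of the rate reduction for a 0/1 partition: if the groups given by
`g : Fin N → Fin K` partition the columns of `Z` (which are unit-norm), then
`½·log det(I + (d/(Nε²))·Z·Zᵀ) ≥ Σ_k (N_k/(2N))·log det(I + (d/(N_k ε²))·Z·Π_k·Zᵀ)`,
where `Π_k = diag(𝟙_{g⁻¹(k)})` and `N_k = tr(Π_k)`. -/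
theorem rate_reduction_nonneg (d N K : ℕ) (hd : 0 < d) (hN : 0 < N)
    (Z : Matrix (Fin d) (Fin N) ℝ) (ε : ℝ) (hε : 0 < ε)
    (hunit : ∀ j : Fin N, ∑ i : Fin d, (Z i j) ^ 2 = 1)
    (g : Fin N → Fin K) :
    ∑ k : Fin K,
      ((Finset.univ.filter (fun i => g i = k)).card : ℝ) / (2 * N) *
        Real.log (Matrix.det (1 +
          ((d : ℝ) / (((Finset.univ.filter (fun i => g i = k)).card : ℝ) * ε ^ 2)) •
            (Z * Matrix.diagonal (fun i => if g i = k then (1 : ℝ) else 0) * Zᵀ))) ≤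
    (1 / 2) * Real.log (Matrix.det (1 + ((d : ℝ) / (N * ε ^ 2)) • (Z * Zᵀ))) :=
  rate_reduction_nonneg' d N K hd hN Z ε hε g
end
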